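/- Fix integers N ≥ 1 and N_t ≥ 1 and real numbers x, y with y ≥ 0 and x ≥ (N − 1)·y. Then O₁O₆ − Re(M₁(y)·M₆(x)) ≤ (π/4)·N(N−1)(2N−1)(N_t−1)·x − (3π/(4N_t))·N²(N−1)²(N_t−2)·y. -/

import Mathlib

/-!
Multiplying out, `O₁O₆ − Re(M₁(y)M₆(x)) = N_t⁻¹ Σ_{n<N} Σ_{m<N_t} n² (1 − cos 2π(mx − ny))`.
Since `cos` is 1-Lipschitz, each term is at most `2π n² |mx − ny|`, which we weaken to the paper's
`3π n² |mx − ny|`: with that constant the final sum is exactly the stated bound. The hypothesis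
`x ≥ (N − 1)y` gives `mx − ny ≥ 0` for `m ≥ 1`, so the absolute value only costs the correction
`2ny` in the column `m = 0`, and the double sum is then evaluated with the closed forms of
`Σ n`, `Σ n²` and `Σ n³`.
-/

open Real

noncomputable section

/-- `O₁ = N(N−1)(2N−1)/6`. -/
def O₁ (N : ℕ) : ℝ := (N : ℝ) * ((N : ℝ) - 1) * (2 * (N : ℝ) - 1) / 6
/-- `O₂ = N(N−1)/2`. -/
def O₂ (N : ℕ) : ℝ := (N : ℝ) * ((N : ℝ) - 1) / 2
/-- `O₃ = (N_t−1)/2`. -/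
def O₃ (Nt : ℕ) : ℝ := ((Nt : ℝ) - 1) / 2
/-- `O₄ = (N_t−1)(2N_t−1)/6`. -/
def O₄ (Nt : ℕ) : ℝ := ((Nt : ℝ) - 1) * (2 * (Nt : ℝ) - 1) / 6
/-- `O₅ = N`. -/
def O₅ (N : ℕ) : ℝ := (N : ℝ)
/-- `O₆ = 1`. -/
def O₆ (Nt : ℕ) : ℝ := 1

/-- `M₁(y) = Σ_{n<N} n² e^{−2πiny}`. -/
def M₁ (N : ℕ) (y : ℝ) : ℂ :=
  ∑ n ∈ Finset.range N, (n : ℂ) ^ 2 * Complex.exp (-(2 * (π : ℂ) * Complex.I * n * y))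
/-- `M₂(y) = Σ_{n<N} n e^{−2πiny}`. -/
def M₂ (N : ℕ) (y : ℝ) : ℂ :=
  ∑ n ∈ Finset.range N, (n : ℂ) * Complex.exp (-(2 * (π : ℂ) * Complex.I * n * y))
/-- `M₃(x) = (1/N_t) Σ_{m<N_t} m e^{2πimx}`. -/
def M₃ (Nt : ℕ) (x : ℝ) : ℂ :=
  (Nt : ℂ)⁻¹ * ∑ m ∈ Finset.range Nt, (m : ℂ) * Complex.exp (2 * (π : ℂ) * Complex.I * m * x)
/-- `M₄(x) = (1/N_t) Σ_{m<N_t} m² e^{2πimx}`. -/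
def M₄ (Nt : ℕ) (x : ℝ) : ℂ :=
  (Nt : ℂ)⁻¹ * ∑ m ∈ Finset.range Nt, (m : ℂ) ^ 2 * Complex.exp (2 * (π : ℂ) * Complex.I * m * x)
/-- `M₅(y) = Σ_{n<N} e^{−2πiny}`. -/
def M₅ (N : ℕ) (y : ℝ) : ℂ :=
  ∑ n ∈ Finset.range N, Complex.exp (-(2 * (π : ℂ) * Complex.I * n * y))
/-- `M₆(x) = (1/N_t) Σ_{m<N_t} e^{2πimx}`. -/
def M₆ (Nt : ℕ) (x : ℝ) : ℂ :=
  (Nt : ℂ)⁻¹ * ∑ m ∈ Finset.range Nt, Complex.exp (2 * (π : ℂ) * Complex.I * m * x)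

lemma one_sub_cos_le_abs (θ : ℝ) : 1 - Real.cos θ ≤ |θ| := by
  have h := Real.abs_cos_sub_cos_le θ 0
  rw [Real.cos_zero, sub_zero, abs_sub_comm] at h
  exact (le_abs_self _).trans h

lemma abs_natCast_mul_sub_le (m : ℕ) {a b : ℝ} (ha : 0 ≤ a) (hab : a ≤ b) :
    |m * b - a| ≤ m * b - a + if m = 0 then 2 * a else 0 := by
  rcases Nat.eq_zero_or_pos m with rfl | hm
  · norm_num [abs_of_nonneg ha, two_mul]
  · have : (1 : ℝ) ≤ m := by exact_mod_cast hm
    rw [if_neg hm.ne', add_zero, abs_of_nonneg (by nlinarith)]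

lemma one_sub_cos_two_pi_mul_natCast_mul_sub_le (m : ℕ) {a b : ℝ} (ha : 0 ≤ a) (hab : a ≤ b) :
    1 - Real.cos (2 * π * (m * b - a)) ≤ 3 * π * (m * b - a + if m = 0 then 2 * a else 0) :=
  calc 1 - Real.cos (2 * π * (m * b - a))
      ≤ 2 * π * |m * b - a| :=
        (one_sub_cos_le_abs _).trans_eq (by rw [abs_mul, abs_of_pos Real.two_pi_pos])
    _ ≤ 3 * π * |m * b - a| := by gcongr; linarith [Real.pi_pos]
    _ ≤ 3 * π * (m * b - a + if m = 0 then 2 * a else 0) := by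
        gcongr; exact abs_natCast_mul_sub_le m ha hab

lemma sum_range_natCast (K : ℕ) : ∑ m ∈ Finset.range K, (m : ℝ) = K * (K - 1) / 2 := by
  induction K with
  | zero => simp
  | succ k ih => rw [Finset.sum_range_succ, ih]; push_cast; ring

lemma sum_range_natCast_sq (K : ℕ) :
    ∑ m ∈ Finset.range K, (m : ℝ) ^ 2 = K * (K - 1) * (2 * K - 1) / 6 := by
  induction K with
  | zero => simp
  | succ k ih => rw [Finset.sum_range_succ, ih]; push_cast; ring

lemma sum_range_natCast_pow_three (K : ℕ) :
    ∑ m ∈ Finset.range K, (m : ℝ) ^ 3 = K ^ 2 * (K - 1) ^ 2 / 4 := by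
  induction K with
  | zero => simp
  | succ k ih => rw [Finset.sum_range_succ, ih]; push_cast; ring

lemma sum_range_natCast_mul_sub_add_ite {K : ℕ} (hK : K ≠ 0) (b a : ℝ) :
    ∑ m ∈ Finset.range K, ((m : ℝ) * b - a + if m = 0 then 2 * a else 0)
      = b * (K * (K - 1) / 2) - (K - 2) * a := by
  rw [Finset.sum_add_distrib, Finset.sum_sub_distrib, ← Finset.sum_mul, sum_range_natCast,
    Finset.sum_ite_eq', if_pos (Finset.mem_range.2 (Nat.pos_of_ne_zero hK))]
  simp only [Finset.sum_const, Finset.card_range, nsmul_eq_mul]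
  ring

lemma re_M₁_mul_M₆ (N Nt : ℕ) (x y : ℝ) :
    (M₁ N y * M₆ Nt x).re = (Nt : ℝ)⁻¹ * ∑ n ∈ Finset.range N, ∑ m ∈ Finset.range Nt,
      (n : ℝ) ^ 2 * Real.cos (2 * π * (m * x - n * y)) := by
  have hM : M₁ N y * M₆ Nt x = (((Nt : ℝ)⁻¹ : ℝ) : ℂ) * ∑ n ∈ Finset.range N,
      ∑ m ∈ Finset.range Nt, (((n : ℝ) ^ 2 : ℝ) : ℂ) *
        Complex.exp (((2 * π * (m * x - n * y) : ℝ) : ℂ) * Complex.I) := by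
    rw [M₁, M₆, mul_left_comm, Finset.sum_mul_sum]
    push_cast
    congr 1
    refine Finset.sum_congr rfl fun n _ => Finset.sum_congr rfl fun m _ => ?_
    rw [mul_assoc, ← Complex.exp_add]
    ring_nf
  simp only [hM, Complex.re_ofReal_mul, Complex.re_sum, Complex.exp_ofReal_mul_I_re]

lemma O₁_mul_O₆_sub_re_M₁_mul_M₆ {Nt : ℕ} (hNt : Nt ≠ 0) (N : ℕ) (x y : ℝ) :
    O₁ N * O₆ Nt - (M₁ N y * M₆ Nt x).re = (Nt : ℝ)⁻¹ * ∑ n ∈ Finset.range N,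
      ∑ m ∈ Finset.range Nt, (n : ℝ) ^ 2 * (1 - Real.cos (2 * π * (m * x - n * y))) := by
  have hO : O₁ N * O₆ Nt
      = (Nt : ℝ)⁻¹ * ∑ n ∈ Finset.range N, ∑ m ∈ Finset.range Nt, (n : ℝ) ^ 2 := by
    simp only [Finset.sum_const, Finset.card_range, nsmul_eq_mul, ← Finset.mul_sum,
      sum_range_natCast_sq, O₁, O₆]
    field_simp
  simp only [hO, re_M₁_mul_M₆, ← mul_sub, ← Finset.sum_sub_distrib, mul_one_sub]

theorem O1O6_minus_re_M1M6_upper_bound_general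
    (N Nt : ℕ) (hNt : 1 ≤ Nt) (x y : ℝ)
    (hy : 0 ≤ y) (hxy : ((N : ℝ) - 1) * y ≤ x) :
    O₁ N * O₆ Nt - (M₁ N y * M₆ Nt x).re
      ≤ (π / 4) * (N : ℝ) * ((N : ℝ) - 1) * (2 * (N : ℝ) - 1) * ((Nt : ℝ) - 1) * x
        - (3 * π / (4 * (Nt : ℝ))) * (N : ℝ) ^ 2 * ((N : ℝ) - 1) ^ 2 * ((Nt : ℝ) - 2) * y := by
  have hNt0 : Nt ≠ 0 := Nat.one_le_iff_ne_zero.1 hNt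
  calc O₁ N * O₆ Nt - (M₁ N y * M₆ Nt x).re
      ≤ (Nt : ℝ)⁻¹ * ∑ n ∈ Finset.range N, ∑ m ∈ Finset.range Nt,
          (n : ℝ) ^ 2 * (3 * π * (m * x - n * y + if m = 0 then 2 * (n * y) else 0)) := by
        rw [O₁_mul_O₆_sub_re_M₁_mul_M₆ hNt0]
        gcongr with n hn m
        have hn : (n : ℝ) + 1 ≤ N := by exact_mod_cast Finset.mem_range.1 hn
        refine one_sub_cos_two_pi_mul_natCast_mul_sub_le m (by positivity) ?_
        nlinarith
    _ = _ := by
        have hpoly : ∀ n : ℕ, (n : ℝ) ^ 2 * (3 * π * (x * (Nt * (Nt - 1) / 2) - (Nt - 2) * (n * y)))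
            = 3 * π * x * (Nt * (Nt - 1) / 2) * (n : ℝ) ^ 2 - 3 * π * (Nt - 2) * y * (n : ℝ) ^ 3 :=
          fun n => by ring
        simp only [← Finset.mul_sum, sum_range_natCast_mul_sub_add_ite hNt0, hpoly,
          Finset.sum_sub_distrib, sum_range_natCast_sq, sum_range_natCast_pow_three]
        field_simp
        ring

/-- **Equation (50), Appendix D.** For `y ≥ 0` and `x ≥ (N−1)y`,
`O₁O₆ − Re(M₁(y)M₆(x)) ≤ (π/4)N(N−1)(2N−1)(N_t−1)x − (3π/(4N_t))N²(N−1)²(N_t−2)y`. -/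
theorem O1O6_minus_re_M1M6_upper_bound
    (N Nt : ℕ) (hN : 1 ≤ N) (hNt : 1 ≤ Nt) (x y : ℝ)
    (hy : 0 ≤ y) (hxy : ((N : ℝ) - 1) * y ≤ x) :
    O₁ N * O₆ Nt - (M₁ N y * M₆ Nt x).re
      ≤ (π / 4) * (N : ℝ) * ((N : ℝ) - 1) * (2 * (N : ℝ) - 1) * ((Nt : ℝ) - 1) * x
        - (3 * π / (4 * (Nt : ℝ))) * (N : ℝ) ^ 2 * ((N : ℝ) - 1) ^ 2 * ((Nt : ℝ) - 2) * y :=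
  O1O6_minus_re_M1M6_upper_bound_general N Nt hNt x y hy hxy

end
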